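/- Let k be a finite field, A a finite-dimensional k-algebra, and V a finite-dimensional A-module such that End_A(V) is a field with d elements. Then for every positive integer t, the number of A-submodules B of V^{⊕t} such that B ≅ V^{⊕(t-1)} and V^{⊕t}/B ≅ V equals (d^{t} - 1)/(d - 1) = 1 + d + d² + ··· + d^{t-1}. -/

import Mathlib

/-!
Write `D = End_A(V)`. A map `φ : V^t → V` is the sum of its components `φ ∘ ιᵢ ∈ D`; if `φ ≠ 0`,
some component is invertible because `D` is a field, so `φ` is surjective and solving for that
coordinate identifies `ker φ` with `V^(t-1)`. Hence the submodules `B` in question are exactly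
the kernels of the `d^t - 1` nonzero maps `V^t → V`, and two surjections have the same kernel iff
they differ by one of the `d - 1` automorphisms of `V`.
-/

theorem Nat.card_subtype_ne {α : Type*} (a : α) : Nat.card {x // x ≠ a} = Nat.card α - 1 := by
  classical
  rw [← Nat.card_congr (Equiv.sumCompl (· = a))]
  rcases finite_or_infinite {x // x ≠ a}
  · rw [Nat.card_sum, Nat.card_unique (α := {x // x = a}), add_tsub_cancel_left]
  · rw [Nat.card_eq_zero_of_infinite, Nat.card_eq_zero_of_infinite, zero_tsub]

theorem IsField.isUnit_of_ne_zero {R : Type*} [Ring R] (h : IsField R) {a : R} (ha : a ≠ 0) :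
    IsUnit a :=
  let := h.toField
  ha.isUnit

section Surjections

variable {A M V : Type*} [Ring A] [AddCommGroup M] [Module A M] [AddCommGroup V] [Module A V]

theorem Nat.card_surjective_linearMap :
    Nat.card {f : M →ₗ[A] V // Function.Surjective f} =
      Nat.card {B : Submodule A M // Nonempty ((M ⧸ B) ≃ₗ[A] V)} * Nat.card (V ≃ₗ[A] V) := by
  let e (B : {B : Submodule A M // Nonempty ((M ⧸ B) ≃ₗ[A] V)}) := B.2.some
  let F (p : {B : Submodule A M // Nonempty ((M ⧸ B) ≃ₗ[A] V)} × (V ≃ₗ[A] V)) :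
      {f : M →ₗ[A] V // Function.Surjective f} :=
    ⟨((e p.1).trans p.2).toLinearMap ∘ₗ p.1.1.mkQ,
      ((e p.1).trans p.2).surjective.comp p.1.1.mkQ_surjective⟩
  have ker_F (p) : LinearMap.ker (F p).1 = p.1.1 := by
    simp [F, LinearMap.ker_comp]
  have F_injective : Function.Injective F := by
    rintro ⟨B, u⟩ ⟨B', u'⟩ h
    obtain rfl : B = B' := Subtype.ext <| by rw [← ker_F (B, u), ← ker_F (B', u'), h]
    suffices u = u' by rw [this]
    ext v
    obtain ⟨x, rfl⟩ := (e B).surjective v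
    obtain ⟨x, rfl⟩ := B.1.mkQ_surjective x
    simpa [F] using congr($(congrArg Subtype.val h) x)
  have F_surjective : Function.Surjective F := by
    rintro ⟨f, hf⟩
    let B : {B : Submodule A M // Nonempty ((M ⧸ B) ≃ₗ[A] V)} :=
      ⟨LinearMap.ker f, ⟨f.quotKerEquivOfSurjective hf⟩⟩
    refine ⟨(B, (e B).symm.trans (f.quotKerEquivOfSurjective hf)), Subtype.ext ?_⟩
    ext x
    simp only [F, LinearMap.coe_comp, LinearEquiv.coe_coe, Function.comp_apply,
      Submodule.mkQ_apply, LinearEquiv.trans_apply, LinearEquiv.symm_apply_apply]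
    rfl
  rw [← Nat.card_prod]
  exact (Nat.card_congr (Equiv.ofBijective F ⟨F_injective, F_surjective⟩)).symm

theorem Nat.card_linearMap_pi {ι : Type*} [Fintype ι] [DecidableEq ι] :
    Nat.card ((ι → M) →ₗ[A] V) = Nat.card (M →ₗ[A] V) ^ Nat.card ι := by
  rw [← Nat.card_congr (LinearMap.lsum A (fun _ : ι => M) ℕ).toEquiv, Nat.card_fun]

end Surjections

section SchurField

variable {A V : Type*} [Ring A] [AddCommGroup V] [Module A V]

theorem Module.nontrivial_of_isField_end (hV : IsField (Module.End A V)) : Nontrivial V := by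
  by_contra h
  rw [not_nontrivial_iff_subsingleton] at h
  obtain ⟨f, g, hfg⟩ := hV.exists_pair_ne
  exact hfg (Subsingleton.elim f g)

theorem Nat.card_linearEquiv_self_of_isField_end (hV : IsField (Module.End A V)) :
    Nat.card (V ≃ₗ[A] V) = Nat.card (Module.End A V) - 1 := by
  let := hV.toField
  rw [← Nat.card_units]
  exact Nat.card_congr (LinearMap.GeneralLinearGroup.generalLinearEquiv A V).toEquiv.symm

theorem LinearMap.apply_eq_sum_single {ι : Type*} [Fintype ι] [DecidableEq ι]
    (φ : (ι → V) →ₗ[A] V) (x : ι → V) : φ x = ∑ i, φ (Pi.single i (x i)) := by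
  conv_lhs => rw [← Finset.univ_sum_single x]
  exact map_sum φ _ _

theorem LinearMap.exists_bijective_comp_single {ι : Type*} [Finite ι] [DecidableEq ι]
    (hV : IsField (Module.End A V)) {φ : (ι → V) →ₗ[A] V} (hφ : φ ≠ 0) :
    ∃ i, Function.Bijective (φ ∘ₗ LinearMap.single A (fun _ => V) i) := by
  by_contra! h
  refine hφ (LinearMap.pi_ext' fun i => ?_)
  by_contra hi
  exact h i ((Module.End.isUnit_iff _).1 (hV.isUnit_of_ne_zero (by simpa using hi)))

theorem LinearMap.surjective_of_ne_zero_of_isField_end {ι : Type*} [Finite ι]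
    (hV : IsField (Module.End A V)) {φ : (ι → V) →ₗ[A] V} (hφ : φ ≠ 0) :
    Function.Surjective φ := by
  classical
  obtain ⟨i, hi⟩ := exists_bijective_comp_single hV hφ
  exact Function.Surjective.of_comp hi.2

theorem LinearMap.nonempty_ker_equiv_of_bijective_comp_single {n : ℕ}
    (φ : (Fin (n + 1) → V) →ₗ[A] V) (i : Fin (n + 1))
    (hi : Function.Bijective (φ ∘ₗ LinearMap.single A (fun _ => V) i)) :
    Nonempty (LinearMap.ker φ ≃ₗ[A] (Fin n → V)) := by
  let c := LinearEquiv.ofBijective _ hi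
  have hφ (x : Fin (n + 1) → V) :
      φ x = c (x i) + ∑ j, φ (Pi.single (i.succAbove j) (x (i.succAbove j))) := by
    rw [apply_eq_sum_single, Fin.sum_univ_succAbove _ i]; rfl
  let r : LinearMap.ker φ →ₗ[A] (Fin n → V) :=
    LinearMap.funLeft A V i.succAbove ∘ₗ (LinearMap.ker φ).subtype
  refine ⟨LinearEquiv.ofBijective r ⟨?_, fun y => ?_⟩⟩
  · rw [← LinearMap.ker_eq_bot, Submodule.eq_bot_iff]
    rintro ⟨x, hx⟩ hrx
    have hxs (j : Fin n) : x (i.succAbove j) = 0 := congrFun hrx j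
    have hxi : x i = 0 := by
      rw [LinearMap.mem_ker, hφ] at hx
      simpa [hxs] using hx
    ext j
    induction j using i.succAboveCases <;> simp [hxi, hxs]
  · let x : Fin (n + 1) → V :=
      i.insertNth (-c.symm (∑ j, φ (Pi.single (i.succAbove j) (y j)))) y
    refine ⟨⟨x, ?_⟩, ?_⟩
    · rw [LinearMap.mem_ker, hφ]
      simp [x]
    · ext j
      simp [r, x]

theorem LinearMap.nonempty_ker_equiv_of_ne_zero (hV : IsField (Module.End A V)) {t : ℕ}
    {φ : (Fin t → V) →ₗ[A] V} (hφ : φ ≠ 0) :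
    Nonempty (LinearMap.ker φ ≃ₗ[A] (Fin (t - 1) → V)) := by
  cases t with
  | zero => exact absurd (Subsingleton.elim φ 0) hφ
  | succ n =>
    obtain ⟨i, hi⟩ := exists_bijective_comp_single hV hφ
    exact nonempty_ker_equiv_of_bijective_comp_single φ i hi

theorem Submodule.nonempty_equiv_pi_of_quotient_equiv (hV : IsField (Module.End A V)) {t : ℕ}
    (B : Submodule A (Fin t → V)) (hB : Nonempty (((Fin t → V) ⧸ B) ≃ₗ[A] V)) :
    Nonempty (B ≃ₗ[A] (Fin (t - 1) → V)) := by
  obtain ⟨e⟩ := hB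
  have := Module.nontrivial_of_isField_end hV
  let φ := e.toLinearMap ∘ₗ B.mkQ
  have hker : LinearMap.ker φ = B := by simp [φ, LinearMap.ker_comp]
  have hφ : φ ≠ 0 := LinearMap.ne_zero_of_surjective (e.surjective.comp B.mkQ_surjective)
  obtain ⟨f⟩ := LinearMap.nonempty_ker_equiv_of_ne_zero hV hφ
  exact ⟨(LinearEquiv.ofEq _ _ hker).symm.trans f⟩

theorem Nat.card_surjective_linearMap_pi_of_isField_end {ι : Type*} [Fintype ι] [DecidableEq ι]
    (hV : IsField (Module.End A V)) :
    Nat.card {φ : (ι → V) →ₗ[A] V // Function.Surjective φ} =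
      Nat.card (Module.End A V) ^ Nat.card ι - 1 := by
  have := Module.nontrivial_of_isField_end hV
  have hsurj (φ : (ι → V) →ₗ[A] V) : Function.Surjective φ ↔ φ ≠ 0 :=
    ⟨LinearMap.ne_zero_of_surjective, LinearMap.surjective_of_ne_zero_of_isField_end hV⟩
  rw [Nat.card_congr (Equiv.subtypeEquivRight hsurj), Nat.card_subtype_ne, Nat.card_linearMap_pi]

end SchurField

theorem stmt9_general (k : Type) [Field k] [Fintype k]
    (A : Type) [Ring A]
    (V : Type) [AddCommGroup V] [Module k V] [Module A V]
    [FiniteDimensional k V]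
    (hfield : IsField (Module.End A V))
    (d : ℕ) (hd : Nat.card (Module.End A V) = d)
    (t : ℕ) :
    Nat.card {B : Submodule A (Fin t → V) //
        Nonempty (B ≃ₗ[A] (Fin (t - 1) → V)) ∧
          Nonempty (((Fin t → V) ⧸ B) ≃ₗ[A] V)} =
      (d ^ t - 1) / (d - 1) ∧
    (d ^ t - 1) / (d - 1) = ∑ i ∈ Finset.range t, d ^ i := by
  have : Finite V := Module.finite_of_finite k
  have : Finite (Module.End A V) := .of_injective _ DFunLike.coe_injective
  have := hfield.nontrivial
  have hd2 : 2 ≤ d := hd ▸ Finite.one_lt_card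
  rw [Nat.card_congr (Equiv.subtypeEquivRight fun B =>
    and_iff_right_of_imp (Submodule.nonempty_equiv_pi_of_quotient_equiv hfield B))]
  refine ⟨(Nat.div_eq_of_eq_mul_left (by omega) ?_).symm, (Nat.geomSum_eq hd2 t).symm⟩
  rw [← hd, ← Nat.card_linearEquiv_self_of_isField_end hfield, ← Nat.card_surjective_linearMap,
    Nat.card_surjective_linearMap_pi_of_isField_end hfield, Nat.card_fin]

/-- Let `k` be a finite field, `A` a finite-dimensional `k`-algebra, and `V`
a finite-dimensional `A`-module such that `End_A(V)` is a field with `d` elements. Then for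
every positive integer `t`, the number of `A`-submodules `B` of `V^{⊕t}` with
`B ≅ V^{⊕(t-1)}` and `V^{⊕t}/B ≅ V` equals `(d^t - 1)/(d - 1) = 1 + d + ⋯ + d^{t-1}`. -/
theorem stmt9 (k : Type) [Field k] [Fintype k]
    (A : Type) [Ring A] [Algebra k A] [FiniteDimensional k A]
    (V : Type) [AddCommGroup V] [Module k V] [Module A V]
    [IsScalarTower k A V] [SMulCommClass k A V] [FiniteDimensional k V]
    (hfield : IsField (Module.End A V))
    (d : ℕ) (hd : Nat.card (Module.End A V) = d)
    (t : ℕ) (ht : 0 < t) :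
    Nat.card {B : Submodule A (Fin t → V) //
        Nonempty (B ≃ₗ[A] (Fin (t - 1) → V)) ∧
          Nonempty (((Fin t → V) ⧸ B) ≃ₗ[A] V)} =
      (d ^ t - 1) / (d - 1) ∧
    (d ^ t - 1) / (d - 1) = ∑ i ∈ Finset.range t, d ^ i :=
  stmt9_general k A V hfield d hd t
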